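/- Let c, s, L, E, I, A, A*, G > 0 be reals, let a, u, v be reals with 1 < a < 16, 1 < u < 4, 1 < v < 4, and let z ∈ ℝ. Then as P → ∞ the vertical displacements V(P,z) converge to 20·c²·L³/(3·E·I·(16 − a)) − (c²·L³/(E·I))·Ψ_{a/16}(z) + 2·s²·L/(E·A·(4 − u)) + 2·c²·L/(G·A*·(4 − v)), where Ψ_{a/16}(z) = Σ_{k=0}^∞ (a/16)^k σ(2^k z) is the Takagi-class function; that is, the vertical displacements of the end nodes of the infinite binary tree are given by a Takagi curve. -/

import Mathlib

open Filter

/-- Distance from a real number to the nearest integer: σ(x) = min_{k∈ℤ} |x − k|. -/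
noncomputable def distNearInt (x : ℝ) : ℝ := ⨅ k : ℤ, |x - k|

/-- The Takagi-class function Ψ_t(z) = Σ_{k=0}^∞ t^k σ(2^k z). -/
noncomputable def takagi (t z : ℝ) : ℝ := ∑' k : ℕ, t ^ k * distNearInt (2 ^ k * z)

/-- Vertical displacement per unit load of the end node located at `z` in a binary tree
structure with `P` levels, from the Principle of Virtual Work (bending + axial + shear). -/
noncomputable def Vdisp (c s L E I A A' G a u v z : ℝ) (P : ℕ) : ℝ :=
  (∑ i ∈ Finset.Icc 1 P, (a ^ (i - 1) / (E * I)) *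
      ∫ x in (0:ℝ)..(L * 2 ^ ((1:ℤ) - (i:ℤ))),
        (4 * c * L * (2 ^ (-(i:ℤ)) - distNearInt (2 ^ (i - 1) * z) / 2 ^ (i - 1)) - c * x) *
          (c * 2 ^ (-(i:ℤ)) * (L * 2 ^ ((1:ℤ) - (i:ℤ)) - x))) +
  (∑ i ∈ Finset.Icc 1 P,
      s ^ 2 * 2 ^ (-(i:ℤ)) * L * 2 ^ ((1:ℤ) - (i:ℤ)) * u ^ (i - 1) / (E * A)) +
  (∑ i ∈ Finset.Icc 1 P,
      c ^ 2 * 2 ^ (-(i:ℤ)) * L * 2 ^ ((1:ℤ) - (i:ℤ)) * v ^ (i - 1) / (G * A'))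

/-! Level `k + 1` of the tree contributes `c²L³/(EI) · (a/16)^k · (5/12 - σ(2^k z))` in bending
(an elementary polynomial integral), and `s²L/(2EA) · (u/4)^k`, `c²L/(2GA') · (v/4)^k` in axial and
shear work. Hence `V(P, z)` is the `P`-th partial sum of three geometric series and the Takagi
series of `Ψ_{a/16}(z)`, which all converge because `|a/16|, |u/4|, |v/4| < 1` and `0 ≤ σ ≤ 1/2`. -/

lemma distNearInt_nonneg (x : ℝ) : 0 ≤ distNearInt x :=
  Real.iInf_nonneg fun _ => abs_nonneg _

lemma distNearInt_le_half (x : ℝ) : distNearInt x ≤ 1 / 2 := by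
  have hb : BddBelow (Set.range fun k : ℤ => |x - k|) :=
    ⟨0, by rintro y ⟨k, rfl⟩; exact abs_nonneg _⟩
  calc distNearInt x ≤ |x - round x| := ciInf_le hb (round x)
    _ ≤ 1 / 2 := by simpa using abs_sub_round x

lemma summable_takagi {t : ℝ} (ht : |t| < 1) (z : ℝ) :
    Summable fun k : ℕ => t ^ k * distNearInt (2 ^ k * z) := by
  refine Summable.of_norm_bounded (summable_geometric_of_lt_one (abs_nonneg t) ht) fun k => ?_
  rw [Real.norm_eq_abs, abs_mul, abs_pow, abs_of_nonneg (distNearInt_nonneg _)]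
  have := distNearInt_le_half (2 ^ k * z)
  exact mul_le_of_le_one_right (by positivity) (by linarith)

lemma hasSum_takagi {t : ℝ} (ht : |t| < 1) (z : ℝ) :
    HasSum (fun k : ℕ => t ^ k * distNearInt (2 ^ k * z)) (takagi t z) :=
  (summable_takagi ht z).hasSum

lemma integral_sub_mul_mul_sub (q k m b : ℝ) :
    ∫ x in (0:ℝ)..b, (q - k * x) * (m * (b - x)) = m * (q * b ^ 2 / 2 - k * b ^ 3 / 6) := by
  have h : ∀ x : ℝ, (q - k * x) * (m * (b - x))
      = m * q * b - (m * q + m * k * b) * x + m * k * x ^ 2 := fun x => by ring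
  simp only [h]
  rw [intervalIntegral.integral_add, intervalIntegral.integral_sub, intervalIntegral.integral_const,
    intervalIntegral.integral_const_mul, intervalIntegral.integral_const_mul, integral_id,
    integral_pow, smul_eq_mul]
  · ring
  all_goals apply Continuous.intervalIntegrable; fun_prop

lemma Finset.sum_Icc_one_eq_sum_range {M : Type*} [AddCommMonoid M] (g : ℕ → M) (P : ℕ) :
    ∑ i ∈ Finset.Icc 1 P, g i = ∑ k ∈ Finset.range P, g (k + 1) := by
  rw [Finset.range_eq_Ico, Finset.sum_Ico_add']
  rfl

lemma two_zpow_neg_succ (k : ℕ) : (2:ℝ) ^ (-((k + 1 : ℕ) : ℤ)) = ((2:ℝ) ^ k)⁻¹ / 2 := by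
  rw [zpow_neg, zpow_natCast, pow_succ, mul_inv, div_eq_mul_inv]

lemma two_zpow_one_sub_succ (k : ℕ) : (2:ℝ) ^ ((1:ℤ) - ((k + 1 : ℕ) : ℤ)) = ((2:ℝ) ^ k)⁻¹ := by
  simp

lemma bending_integral (c L d : ℝ) (k : ℕ) :
    ∫ x in (0:ℝ)..(L * 2 ^ ((1:ℤ) - ((k + 1 : ℕ) : ℤ))),
      (4 * c * L * (2 ^ (-((k + 1 : ℕ) : ℤ)) - d / 2 ^ (k + 1 - 1)) - c * x) *
        (c * 2 ^ (-((k + 1 : ℕ) : ℤ)) * (L * 2 ^ ((1:ℤ) - ((k + 1 : ℕ) : ℤ)) - x))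
      = c ^ 2 * L ^ 3 / 16 ^ k * (5 / 12 - d) := by
  rw [integral_sub_mul_mul_sub, two_zpow_neg_succ, two_zpow_one_sub_succ, Nat.add_sub_cancel,
    show (16:ℝ) ^ k = (2 ^ k) ^ 4 by rw [← pow_mul, mul_comm, pow_mul]; norm_num]
  field_simp
  ring

lemma hasSum_bending (c L E I a z : ℝ) (ha : |a| < 16) :
    HasSum (fun k : ℕ => (a ^ (k + 1 - 1) / (E * I)) *
      ∫ x in (0:ℝ)..(L * 2 ^ ((1:ℤ) - ((k + 1 : ℕ) : ℤ))),
        (4 * c * L * (2 ^ (-((k + 1 : ℕ) : ℤ)) - distNearInt (2 ^ (k + 1 - 1) * z) / 2 ^ (k + 1 - 1))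
          - c * x) * (c * 2 ^ (-((k + 1 : ℕ) : ℤ)) * (L * 2 ^ ((1:ℤ) - ((k + 1 : ℕ) : ℤ)) - x)))
      (20 * c ^ 2 * L ^ 3 / (3 * E * I * (16 - a)) -
        (c ^ 2 * L ^ 3 / (E * I)) * takagi (a / 16) z) := by
  have hr : |a / 16| < 1 := by rw [abs_div, abs_of_pos (by norm_num : (0:ℝ) < 16)]; linarith
  have hsum := (((hasSum_geometric_of_abs_lt_one hr).mul_left (5 / 12)).sub
    (hasSum_takagi hr z)).mul_left (c ^ 2 * L ^ 3 / (E * I))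
  have hval : c ^ 2 * L ^ 3 / (E * I) * (5 / 12 * (1 - a / 16)⁻¹ - takagi (a / 16) z) =
      20 * c ^ 2 * L ^ 3 / (3 * E * I * (16 - a)) - c ^ 2 * L ^ 3 / (E * I) * takagi (a / 16) z := by
    rw [show (1:ℝ) - a / 16 = (16 - a) / 16 by ring, inv_div]
    simp only [div_eq_mul_inv, mul_inv]
    ring
  refine hval ▸ hsum.congr_fun fun k => ?_
  rw [bending_integral, Nat.add_sub_cancel, div_pow]
  ring

lemma hasSum_axial_term (s L E A u : ℝ) (hu : |u| < 4) :
    HasSum (fun k : ℕ => s ^ 2 * 2 ^ (-((k + 1 : ℕ) : ℤ)) * L * 2 ^ ((1:ℤ) - ((k + 1 : ℕ) : ℤ)) *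
      u ^ (k + 1 - 1) / (E * A)) (2 * s ^ 2 * L / (E * A * (4 - u))) := by
  have hr : |u / 4| < 1 := by rw [abs_div, abs_of_pos (by norm_num : (0:ℝ) < 4)]; linarith
  have hsum := (hasSum_geometric_of_abs_lt_one hr).mul_left (s ^ 2 * L / (2 * (E * A)))
  have hval : s ^ 2 * L / (2 * (E * A)) * (1 - u / 4)⁻¹ = 2 * s ^ 2 * L / (E * A * (4 - u)) := by
    rw [show (1:ℝ) - u / 4 = (4 - u) / 4 by ring, inv_div]
    simp only [div_eq_mul_inv, mul_inv]
    ring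
  refine hval ▸ hsum.congr_fun fun k => ?_
  rw [two_zpow_neg_succ, two_zpow_one_sub_succ, Nat.add_sub_cancel, div_pow,
    show (4:ℝ) ^ k = (2 ^ k) ^ 2 by rw [← pow_mul, mul_comm, pow_mul]; norm_num]
  ring

theorem vertical_displacement_infinite_general (c s L E I A A' G a u v : ℝ)
    (ha1 : 1 < a) (ha16 : a < 16) (hu1 : 1 < u) (hu4 : u < 4) (hv1 : 1 < v) (hv4 : v < 4)
    (z : ℝ) :
    Tendsto (fun P : ℕ => Vdisp c s L E I A A' G a u v z P) atTop
      (nhds (20 * c ^ 2 * L ^ 3 / (3 * E * I * (16 - a)) -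
        (c ^ 2 * L ^ 3 / (E * I)) * takagi (a / 16) z +
        2 * s ^ 2 * L / (E * A * (4 - u)) +
        2 * c ^ 2 * L / (G * A' * (4 - v)))) := by
  have hbend := hasSum_bending c L E I a z (abs_lt.2 ⟨by linarith, ha16⟩)
  have haxial := hasSum_axial_term s L E A u (abs_lt.2 ⟨by linarith, hu4⟩)
  have hshear := hasSum_axial_term c L G A' v (abs_lt.2 ⟨by linarith, hv4⟩)
  simp only [Vdisp, Finset.sum_Icc_one_eq_sum_range]
  exact (hbend.tendsto_sum_nat.add haxial.tendsto_sum_nat).add hshear.tendsto_sum_nat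

/-- For `1 < a < 16`, `1 < u < 4`, `1 < v < 4`, the vertical displacements of the end nodes
converge, as the number of levels tends to infinity, to a Takagi curve. -/
theorem vertical_displacement_infinite (c s L E I A A' G a u v : ℝ)
    (hc : 0 < c) (hs : 0 < s) (hL : 0 < L) (hE : 0 < E) (hI : 0 < I)
    (hA : 0 < A) (hA' : 0 < A') (hG : 0 < G)
    (ha1 : 1 < a) (ha16 : a < 16) (hu1 : 1 < u) (hu4 : u < 4) (hv1 : 1 < v) (hv4 : v < 4)
    (z : ℝ) :
    Tendsto (fun P : ℕ => Vdisp c s L E I A A' G a u v z P) atTop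
      (nhds (20 * c ^ 2 * L ^ 3 / (3 * E * I * (16 - a)) -
        (c ^ 2 * L ^ 3 / (E * I)) * takagi (a / 16) z +
        2 * s ^ 2 * L / (E * A * (4 - u)) +
        2 * c ^ 2 * L / (G * A' * (4 - v)))) :=
  vertical_displacement_infinite_general c s L E I A A' G a u v ha1 ha16 hu1 hu4 hv1 hv4 z
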